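/- arXiv:1211.6239 — 5 statements merged into one kernel-verified Lean document; each statement's English description precedes it below -/
import Mathlib

section
/- Fix D₁, D₂ > 0, α > 2, and P > 0, and for each λ > 0 let x₂(λ) be the unique positive root of D₁ x^{α/2} (2^{D₂ π λ x} − 1) = P. Then λ ↦ x₂(λ) is strictly decreasing and λ ↦ λ·x₂(λ) is strictly increasing. -/
/-!
Write the power law as `F(x, λx) = P` with `F(x, s) = D₁ x^{α/2} (2^{D₂πs} − 1)`, which is strictly
increasing in each variable. If `λ < μ` but `x₂(λ) ≤ x₂(μ)`, then also `λ x₂(λ) < μ x₂(μ)`, so `F` is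
strictly larger at `μ`; hence `x₂` decreases. If `μ x₂(μ) ≤ λ x₂(λ)`, then, `x₂` having decreased
strictly, `F` is strictly larger at `λ`; hence `λ x₂(λ)` increases.
-/

open Real Set

section

variable {α β R : Type*} [PartialOrder α] [PartialOrder β] [Semiring R] [PartialOrder R]
  [IsStrictOrderedRing R]

theorem StrictMonoOn.mul_prod {u : α → R} {v : β → R} {s : Set α} {t : Set β}
    (hu : StrictMonoOn u s) (hv : StrictMonoOn v t) (hu₀ : ∀ x ∈ s, 0 < u x)
    (hv₀ : ∀ y ∈ t, 0 < v y) :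
    StrictMonoOn (fun p : α × β => u p.1 * v p.2) (s ×ˢ t) := by
  rintro ⟨x, y⟩ ⟨hx, hy⟩ ⟨x', y'⟩ ⟨hx', hy'⟩ hlt
  rcases Prod.lt_iff.mp hlt with ⟨hxx, hyy⟩ | ⟨hxx, hyy⟩
  · exact mul_lt_mul (hu hx hx' hxx) (hv.monotoneOn hy hy' hyy) (hv₀ y hy) (hu₀ x' hx').le
  · exact mul_lt_mul' (hu.monotoneOn hx hx' hxx) (hv hy hy' hyy) (hv₀ y hy).le (hu₀ x' hx')

end

theorem strictAntiOn_and_strictMonoOn_mul_of_strictMonoOn_prod {F : ℝ × ℝ → ℝ} {x : ℝ → ℝ}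
    {P : ℝ} (hF : StrictMonoOn F (Ioi 0 ×ˢ Ioi 0)) (hx₀ : ∀ l > 0, 0 < x l)
    (hx : ∀ l > 0, F (x l, l * x l) = P) :
    StrictAntiOn x (Ioi 0) ∧ StrictMonoOn (fun l => l * x l) (Ioi 0) := by
  have mem : ∀ l > (0 : ℝ), (x l, l * x l) ∈ Ioi (0 : ℝ) ×ˢ Ioi 0 := fun l hl =>
    ⟨hx₀ l hl, mul_pos hl (hx₀ l hl)⟩
  have hanti : StrictAntiOn x (Ioi 0) := by
    intro l hl m hm hlm
    by_contra! hle
    have hprod : l * x l < m * x m := mul_lt_mul hlm hle (hx₀ l hl) (le_of_lt hm)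
    have := hF (mem l hl) (mem m hm) (Prod.lt_iff.mpr (Or.inr ⟨hle, hprod⟩))
    rw [hx l hl, hx m hm] at this
    exact lt_irrefl P this
  refine ⟨hanti, fun l hl m hm hlm => ?_⟩
  by_contra! hle
  have := hF (mem m hm) (mem l hl) (Prod.lt_iff.mpr (Or.inl ⟨hanti hl hm hlm, hle⟩))
  rw [hx l hl, hx m hm] at this
  exact lt_irrefl P this

theorem strictMonoOn_powerLaw {D₁ D₂ α : ℝ} (hD₁ : 0 < D₁) (hD₂ : 0 < D₂) (hα : 0 < α) :
    StrictMonoOn (fun p : ℝ × ℝ => D₁ * p.1 ^ (α / 2) * ((2 : ℝ) ^ (D₂ * π * p.2) - 1))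
      (Ioi 0 ×ˢ Ioi 0) := by
  have hc : 0 < D₂ * π := mul_pos hD₂ pi_pos
  refine StrictMonoOn.mul_prod (u := fun x => D₁ * x ^ (α / 2))
    (v := fun s => (2 : ℝ) ^ (D₂ * π * s) - 1) ?_ ?_ ?_ ?_
  · exact fun x hx y hy hxy => mul_lt_mul_of_pos_left
      (strictMonoOn_rpow_Ici_of_exponent_pos (half_pos hα) (Ioi_subset_Ici_self hx)
        (Ioi_subset_Ici_self hy) hxy) hD₁
  · exact fun s _ t _ hst => sub_lt_sub_right
      (rpow_lt_rpow_of_exponent_lt one_lt_two (mul_lt_mul_of_pos_left hst hc)) 1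
  · exact fun x hx => mul_pos hD₁ (rpow_pos_of_pos hx _)
  · exact fun s hs => sub_pos.mpr (one_lt_rpow one_lt_two (mul_pos hc hs))

theorem stmt_4_general (D₁ D₂ α P : ℝ) (hD₁ : 0 < D₁) (hD₂ : 0 < D₂) (hα : 2 < α)
    (x₂ : ℝ → ℝ)
    (hroot : ∀ l > (0:ℝ), 0 < x₂ l ∧
      D₁ * (x₂ l) ^ (α / 2) * ((2 : ℝ) ^ (D₂ * π * l * x₂ l) - 1) = P) :
    StrictAntiOn x₂ (Set.Ioi 0) ∧ StrictMonoOn (fun l => l * x₂ l) (Set.Ioi 0) := by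
  refine strictAntiOn_and_strictMonoOn_mul_of_strictMonoOn_prod (P := P)
    (strictMonoOn_powerLaw hD₁ hD₂ (by linarith)) (fun l hl => (hroot l hl).1) fun l hl => ?_
  simpa only [mul_assoc] using (hroot l hl).2

/-- If `x₂(λ)` is the unique positive root of `D₁ x^{α/2}(2^{D₂πλx} − 1) = P`, then
`x₂` is strictly decreasing and `λ ↦ λ·x₂(λ)` is strictly increasing. -/
theorem stmt_4 (D₁ D₂ α P : ℝ) (hD₁ : 0 < D₁) (hD₂ : 0 < D₂) (hα : 2 < α) (hP : 0 < P)
    (x₂ : ℝ → ℝ)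
    (hroot : ∀ l > (0:ℝ), 0 < x₂ l ∧
      D₁ * (x₂ l) ^ (α / 2) * ((2 : ℝ) ^ (D₂ * π * l * x₂ l) - 1) = P)
    (huniq : ∀ l > (0:ℝ), ∀ x > (0:ℝ),
      D₁ * x ^ (α / 2) * ((2 : ℝ) ^ (D₂ * π * l * x) - 1) = P → x = x₂ l) :
    StrictAntiOn x₂ (Set.Ioi 0) ∧ StrictMonoOn (fun l => l * x₂ l) (Set.Ioi 0) :=
  stmt_4_general D₁ D₂ α P hD₁ hD₂ hα x₂ hroot
end

section
/- Fix D₁, D₂ > 0, α > 2, μ > 0, P_c > 0, and for λ > 0 define L_λ(x) = D₁ x^{α/2}(2^{D₂πλx} − 1) + P_c − μπλx for x > 0. Then for every x > 0 and every λ with λ < ((α+2)P_c)/(α μ π x_min), where x_min = (2μ/((α+2)(ln 2)D₁D₂))^{2/α}, we have L_λ(x) > 0. -/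
open Real Set

/-!
Since `2 ^ t - 1 ≥ t log 2`, the Lagrangian is at least
`P_c - πλ (μ x - c x ^ p)` with `c = (log 2) D₁ D₂` and `p = (α + 2) / 2`.
The concave function `x ↦ μ x - c x ^ p` is maximal at its critical point `x_min`, where it equals
`α μ x_min / (α + 2)`, so the bound on `λ` is exactly what makes `P_c` win.
-/

namespace Real

lemma mul_log_le_rpow_sub_one {b : ℝ} (hb : 0 < b) (t : ℝ) : t * log b ≤ b ^ t - 1 :=
  log_rpow hb t ▸ log_le_sub_one_of_pos (rpow_pos_of_pos hb t)

lemma rpow_add_mul_rpow_sub_one_mul_sub_le {p a x : ℝ} (hp : 1 ≤ p) (ha : 0 < a) (hx : 0 ≤ x) :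
    a ^ p + p * a ^ (p - 1) * (x - a) ≤ x ^ p := by
  have bernoulli : 1 + p * (x / a - 1) ≤ (1 + (x / a - 1)) ^ p :=
    one_add_mul_self_le_rpow_one_add (by linarith [div_nonneg hx ha.le]) hp
  rw [add_sub_cancel, div_rpow hx ha.le, le_div_iff₀ (rpow_pos_of_pos ha p)] at bernoulli
  have hap : a ^ p = a ^ (p - 1) * a := by rw [← rpow_add_one ha.ne', sub_add_cancel]
  calc a ^ p + p * a ^ (p - 1) * (x - a) = (1 + p * (x / a - 1)) * a ^ p := by
        rw [hap]; field_simp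
    _ ≤ x ^ p := bernoulli

lemma mul_sub_mul_rpow_le {c μ p x : ℝ} (hc : 0 < c) (hμ : 0 < μ) (hp : 1 < p) (hx : 0 ≤ x) :
    μ * x - c * x ^ p ≤ (1 - 1 / p) * μ * (μ / (c * p)) ^ (1 / (p - 1)) := by
  set a := (μ / (c * p)) ^ (1 / (p - 1))
  have ha : 0 < a := rpow_pos_of_pos (by positivity) _
  have critical : a ^ (p - 1) = μ / (c * p) := by
    rw [← rpow_mul (by positivity), one_div_mul_cancel (by linarith), rpow_one]
  have hap : a ^ p = μ / (c * p) * a := by rw [← critical, ← rpow_add_one ha.ne', sub_add_cancel]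
  have tangent := rpow_add_mul_rpow_sub_one_mul_sub_le hp.le ha hx
  rw [hap, critical] at tangent
  have hcp : c * (μ / (c * p) * a + p * (μ / (c * p)) * (x - a)) = μ * a / p + μ * (x - a) := by
    field_simp
  have scaled := mul_le_mul_of_nonneg_left tangent hc.le
  rw [hcp] at scaled
  have : (1 - 1 / p) * μ * a = μ * a - μ * a / p := by ring
  linarith

end Real

theorem stmt_5_general (D₁ D₂ α μ Pc : ℝ) (hD₁ : 0 < D₁) (hD₂ : 0 < D₂) (hα : 2 < α)
    (hμ : 0 < μ) :
    ∀ x > (0:ℝ), ∀ l > (0:ℝ),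
      l < ((α + 2) * Pc) /
          (α * μ * π * ((2 * μ / ((α + 2) * Real.log 2 * D₁ * D₂)) ^ (2 / α))) →
      D₁ * x ^ (α / 2) * ((2 : ℝ) ^ (D₂ * π * l * x) - 1) + Pc - μ * π * l * x > 0 := by
  intro x hx l hl hlt
  set c := Real.log 2 * D₁ * D₂ with hc_def
  set xMin := (2 * μ / ((α + 2) * Real.log 2 * D₁ * D₂)) ^ (2 / α)
  have hc : 0 < c := by have := Real.log_pos one_lt_two; positivity
  have hxMin : 0 < xMin := rpow_pos_of_pos (by positivity) _
  have linearized :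
      c * π * l * x ^ ((α + 2) / 2) ≤ D₁ * x ^ (α / 2) * ((2 : ℝ) ^ (D₂ * π * l * x) - 1) := by
    have hxp : x ^ ((α + 2) / 2) = x ^ (α / 2) * x := by
      rw [add_div, div_self two_ne_zero, rpow_add_one hx.ne']
    rw [hxp]
    have := mul_le_mul_of_nonneg_left (mul_log_le_rpow_sub_one two_pos (D₂ * π * l * x))
      (mul_nonneg hD₁.le (rpow_nonneg hx.le (α / 2)))
    linarith
  have concave := mul_sub_mul_rpow_le hc hμ (by linarith : 1 < (α + 2) / 2) hx.le
  have hmax : (1 - 1 / ((α + 2) / 2)) * μ * (μ / (c * ((α + 2) / 2))) ^ (1 / ((α + 2) / 2 - 1))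
      = α * μ * xMin / (α + 2) := by
    have h1 : 1 / ((α + 2) / 2 - 1) = 2 / α := by
      rw [show (α + 2) / 2 - 1 = α / 2 by ring, one_div_div]
    have h2 : μ / (c * ((α + 2) / 2)) = 2 * μ / ((α + 2) * Real.log 2 * D₁ * D₂) := by
      rw [hc_def]; field_simp
    rw [h1, h2]
    field_simp
    ring
  have small_density : π * l * (α * μ * xMin / (α + 2)) < Pc := by
    rw [lt_div_iff₀ (by positivity)] at hlt
    rw [show π * l * (α * μ * xMin / (α + 2)) = l * (α * μ * π * xMin) / (α + 2) by ring,
      div_lt_iff₀ (by linarith)]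
    linarith
  linarith [mul_le_mul_of_nonneg_left (hmax ▸ concave) (by positivity : 0 ≤ π * l)]

/-- For sufficiently small density `λ`, the Lagrangian
`L_λ(x) = D₁ x^{α/2}(2^{D₂πλx} − 1) + P_c − μπλx` is strictly positive for all `x > 0`. -/
theorem stmt_5 (D₁ D₂ α μ Pc : ℝ) (hD₁ : 0 < D₁) (hD₂ : 0 < D₂) (hα : 2 < α)
    (hμ : 0 < μ) (hPc : 0 < Pc) :
    ∀ x > (0:ℝ), ∀ l > (0:ℝ),
      l < ((α + 2) * Pc) /
          (α * μ * π * ((2 * μ / ((α + 2) * Real.log 2 * D₁ * D₂)) ^ (2 / α))) →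
      D₁ * x ^ (α / 2) * ((2 : ℝ) ^ (D₂ * π * l * x) - 1) + Pc - μ * π * l * x > 0 :=
  stmt_5_general D₁ D₂ α μ Pc hD₁ hD₂ hα hμ
end

section
/- Fix D₁, D₂ > 0, α > 2, μ > 0, and suppose x₁(λ) > 0 satisfies the stationarity equation (α/2)D₁ x^{(α−2)/2}(2^{D₂πλx} − 1) + (ln 2)D₁D₂πλ x^{α/2} 2^{D₂πλx} = μπλ for each λ > 0, with this equation having a unique positive root. Then λ ↦ x₁(λ) is strictly decreasing and λ ↦ λ·x₁(λ) is strictly increasing. -/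
/-!
Dividing the stationarity equation by `λ` turns it into `x^{α/2} · φ(λx) = μπ`, where
`φ(y) = (α/2) D₁ (2^{D₂πy} − 1)/y + (ln 2) D₁ D₂ π 2^{D₂πy}` is positive and strictly increasing,
because `(2^{cy} − 1)/y` is a secant slope of the convex function `y ↦ 2^{cy}` at `0`.
Since the product of the two increasing factors stays constant, `x₁(λ)` and `λ x₁(λ)` cannot
increase together, nor decrease together, as `λ` grows.
-/

open Real Set

lemma strictMonoOn_rpow_mul_sub_one_div {b c : ℝ} (hb : 1 < b) (hc : 0 < c) :
    StrictMonoOn (fun y => (b ^ (c * y) - 1) / y) (Ioi 0) := by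
  intro y₁ hy₁ y₂ hy₂ hlt
  have hk : 0 < log b * c := mul_pos (log_pos hb) hc
  have hsecant := strictConvexOn_exp.secant_strict_mono (a := 0) (mem_univ _) (mem_univ _)
    (mem_univ _) (mul_pos hk hy₁).ne' (mul_pos hk hy₂).ne' (mul_lt_mul_of_pos_left hlt hk)
  have hslope : ∀ y : ℝ, 0 < y →
      (b ^ (c * y) - 1) / y = log b * c * ((exp (log b * c * y) - exp 0) / (log b * c * y - 0)) := by
    intro y hy
    have := (log_pos hb).ne'
    rw [rpow_def_of_pos (zero_lt_one.trans hb), exp_zero, sub_zero, ← mul_assoc]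
    field_simp
  simp only [mem_Ioi] at hy₁ hy₂
  dsimp only
  rw [hslope y₁ hy₁, hslope y₂ hy₂]
  exact mul_lt_mul_of_pos_left hsecant hk

/-- `x ^ (α / 2) * stationaryFactor D₁ D₂ α (λ * x) = μ * π` is the stationarity equation
`∂L_λ/∂x = μπλ` divided by `λ`. -/
noncomputable def stationaryFactor (D₁ D₂ α y : ℝ) : ℝ :=
  α / 2 * D₁ * (((2 : ℝ) ^ (D₂ * π * y) - 1) / y) + log 2 * D₁ * D₂ * π * (2 : ℝ) ^ (D₂ * π * y)

section stationaryFactor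

variable {D₁ D₂ α : ℝ}

lemma mul_rpow_mul_stationaryFactor {l x : ℝ} (hl : 0 < l) (hx : 0 < x) :
    l * (x ^ (α / 2) * stationaryFactor D₁ D₂ α (l * x)) =
      α / 2 * D₁ * x ^ ((α - 2) / 2) * ((2 : ℝ) ^ (D₂ * π * l * x) - 1)
        + log 2 * D₁ * D₂ * π * l * x ^ (α / 2) * (2 : ℝ) ^ (D₂ * π * l * x) := by
  have hpow : x ^ (α / 2) = x ^ ((α - 2) / 2) * x := by
    rw [← rpow_add_one hx.ne']
    ring_nf
  simp only [stationaryFactor, ← mul_assoc]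
  rw [hpow]
  field_simp

lemma stationaryFactor_pos (hD₁ : 0 < D₁) (hD₂ : 0 < D₂) (hα : 0 ≤ α) {y : ℝ} (hy : 0 < y) :
    0 < stationaryFactor D₁ D₂ α y := by
  have hgrowth : 1 < (2 : ℝ) ^ (D₂ * π * y) := one_lt_rpow (by norm_num) (by positivity)
  have hslope : 0 ≤ ((2 : ℝ) ^ (D₂ * π * y) - 1) / y := div_nonneg (by linarith) hy.le
  unfold stationaryFactor
  have hlog : 0 < log 2 := log_pos one_lt_two
  positivity

lemma stationaryFactor_strictMonoOn (hD₁ : 0 < D₁) (hD₂ : 0 < D₂) (hα : 0 ≤ α) :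
    StrictMonoOn (stationaryFactor D₁ D₂ α) (Ioi 0) := by
  have hc : 0 < D₂ * π := mul_pos hD₂ pi_pos
  have hlog : 0 < log 2 := log_pos one_lt_two
  have hslope := strictMonoOn_rpow_mul_sub_one_div one_lt_two hc
  have hexp : StrictMono fun y : ℝ => (2 : ℝ) ^ (D₂ * π * y) :=
    fun _ _ hlt => (rpow_lt_rpow_left_iff one_lt_two).mpr (mul_lt_mul_of_pos_left hlt hc)
  refine MonotoneOn.add_strictMono (fun y₁ hy₁ y₂ hy₂ hle => ?_) fun y₁ _ y₂ _ hlt => ?_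
  · exact mul_le_mul_of_nonneg_left (hslope.monotoneOn hy₁ hy₂ hle) (by positivity)
  · exact mul_lt_mul_of_pos_left (hexp hlt) (by positivity)

end stationaryFactor

section ConstantProduct

variable {f g x : ℝ → ℝ} {C : ℝ}

lemma strictAntiOn_of_mul_eq_const (hf : StrictMonoOn f (Ioi 0)) (hg : StrictMonoOn g (Ioi 0))
    (hf₀ : ∀ t > 0, 0 < f t) (hg₀ : ∀ t > 0, 0 < g t) (hx : ∀ l > 0, 0 < x l)
    (hC : ∀ l > 0, f (x l) * g (l * x l) = C) :
    StrictAntiOn x (Ioi 0) := by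
  intro l₁ hl₁ l₂ hl₂ hlt
  simp only [mem_Ioi] at hl₁ hl₂
  by_contra! hle
  have hprod : l₁ * x l₁ < l₂ * x l₂ := mul_lt_mul hlt hle (hx l₁ hl₁) hl₂.le
  have := mul_lt_mul' (hf.monotoneOn (hx l₁ hl₁) (hx l₂ hl₂) hle)
    (hg (mul_pos hl₁ (hx l₁ hl₁)) (mul_pos hl₂ (hx l₂ hl₂)) hprod)
    (hg₀ _ (mul_pos hl₁ (hx l₁ hl₁))).le (hf₀ _ (hx l₂ hl₂))
  linarith [hC l₁ hl₁, hC l₂ hl₂]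

lemma strictMonoOn_id_mul_of_mul_eq_const (hf : StrictMonoOn f (Ioi 0))
    (hg : StrictMonoOn g (Ioi 0)) (hf₀ : ∀ t > 0, 0 < f t) (hg₀ : ∀ t > 0, 0 < g t)
    (hx : ∀ l > 0, 0 < x l) (hC : ∀ l > 0, f (x l) * g (l * x l) = C) :
    StrictMonoOn (fun l => l * x l) (Ioi 0) := by
  intro l₁ hl₁ l₂ hl₂ hlt
  have hanti := strictAntiOn_of_mul_eq_const hf hg hf₀ hg₀ hx hC hl₁ hl₂ hlt
  simp only [mem_Ioi] at hl₁ hl₂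
  by_contra! hle
  have := mul_lt_mul (hf (hx l₂ hl₂) (hx l₁ hl₁) hanti)
    (hg.monotoneOn (mul_pos hl₂ (hx l₂ hl₂)) (mul_pos hl₁ (hx l₁ hl₁)) hle)
    (hg₀ _ (mul_pos hl₂ (hx l₂ hl₂))) (hf₀ _ (hx l₁ hl₁)).le
  linarith [hC l₁ hl₁, hC l₂ hl₂]

end ConstantProduct

theorem stmt_9_general (D₁ D₂ α μ : ℝ) (hD₁ : 0 < D₁) (hD₂ : 0 < D₂) (hα : 2 < α)
    (x₁ : ℝ → ℝ)
    (hroot : ∀ l > (0:ℝ), 0 < x₁ l ∧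
      (α / 2) * D₁ * (x₁ l) ^ ((α - 2) / 2) * ((2 : ℝ) ^ (D₂ * π * l * x₁ l) - 1)
        + Real.log 2 * D₁ * D₂ * π * l * (x₁ l) ^ (α / 2)
            * (2 : ℝ) ^ (D₂ * π * l * x₁ l)
      = μ * π * l) :
    StrictAntiOn x₁ (Set.Ioi 0) ∧ StrictMonoOn (fun l => l * x₁ l) (Set.Ioi 0) := by
  have hpow : StrictMonoOn (fun t : ℝ => t ^ (α / 2)) (Ioi 0) :=
    (strictMonoOn_rpow_Ici_of_exponent_pos (by linarith)).mono Ioi_subset_Ici_self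
  have hpow₀ : ∀ t > (0 : ℝ), 0 < t ^ (α / 2) := fun t ht => rpow_pos_of_pos ht _
  have hφ := stationaryFactor_strictMonoOn hD₁ hD₂ (by linarith : 0 ≤ α)
  have hφ₀ : ∀ y > (0 : ℝ), 0 < stationaryFactor D₁ D₂ α y :=
    fun y => stationaryFactor_pos hD₁ hD₂ (by linarith)
  have hx₀ : ∀ l > (0 : ℝ), 0 < x₁ l := fun l hl => (hroot l hl).1
  have hC : ∀ l > (0 : ℝ), x₁ l ^ (α / 2) * stationaryFactor D₁ D₂ α (l * x₁ l) = μ * π := by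
    intro l hl
    apply mul_left_cancel₀ hl.ne'
    rw [mul_rpow_mul_stationaryFactor hl (hx₀ l hl), (hroot l hl).2, mul_comm l]
  exact ⟨strictAntiOn_of_mul_eq_const hpow hφ hpow₀ hφ₀ hx₀ hC,
    strictMonoOn_id_mul_of_mul_eq_const hpow hφ hpow₀ hφ₀ hx₀ hC⟩

/-- If `x₁(λ)` is the unique positive root of the stationarity equation
`(α/2)D₁ x^{(α−2)/2}(2^{D₂πλx} − 1) + (ln 2)D₁D₂πλ x^{α/2} 2^{D₂πλx} = μπλ`, then
`x₁` is strictly decreasing and `λ ↦ λ·x₁(λ)` is strictly increasing. -/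
theorem stmt_9 (D₁ D₂ α μ : ℝ) (hD₁ : 0 < D₁) (hD₂ : 0 < D₂) (hα : 2 < α) (hμ : 0 < μ)
    (x₁ : ℝ → ℝ)
    (hroot : ∀ l > (0:ℝ), 0 < x₁ l ∧
      (α / 2) * D₁ * (x₁ l) ^ ((α - 2) / 2) * ((2 : ℝ) ^ (D₂ * π * l * x₁ l) - 1)
        + Real.log 2 * D₁ * D₂ * π * l * (x₁ l) ^ (α / 2)
            * (2 : ℝ) ^ (D₂ * π * l * x₁ l)
      = μ * π * l)
    (huniq : ∀ l > (0:ℝ), ∀ x > (0:ℝ),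
      (α / 2) * D₁ * x ^ ((α - 2) / 2) * ((2 : ℝ) ^ (D₂ * π * l * x) - 1)
        + Real.log 2 * D₁ * D₂ * π * l * x ^ (α / 2) * (2 : ℝ) ^ (D₂ * π * l * x)
      = μ * π * l → x = x₁ l) :
    StrictAntiOn x₁ (Set.Ioi 0) ∧ StrictMonoOn (fun l => l * x₁ l) (Set.Ioi 0) :=
  stmt_9_general D₁ D₂ α μ hD₁ hD₂ hα x₁ hroot
end

section
/- Under the assumptions of the previous statement (x₁(λ) the positive stationary point of L_λ), the function λ ↦ P̄(λ) := D₁ x₁(λ)^{α/2}(2^{D₂πλx₁(λ)} − 1) is strictly increasing in λ. -/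
open Real Set

/-!
Put `s = D₂πλx₁(λ)`. Dividing the first-order condition by `D₁D₂πλ` and writing
`x^{(α−2)/2} = x^{α/2}/x` turns it into `x₁(λ)^{α/2} K(s) = μ/(D₁D₂)`, where
`K(s) = (α/2)(2^s − 1)/s + (ln 2) 2^s` (`stationarityFactor`) is positive and increasing in `s`
because `2^s` is convex. Consequently `s` is strictly increasing in `λ`: if it were not, `x₁`
could not decrease, and then `s = D₂πλx₁(λ)` would increase after all. Eliminating
`x₁(λ)^{α/2}` gives `P̄(λ) = (μ/D₂)(2^s − 1)/K(s)`, and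
`K(s)/(2^s − 1) = α/(2s) + ln 2 + ln 2/(2^s − 1)` is strictly decreasing in `s`.
-/

lemma rpow_sub_one_div_monotoneOn {b : ℝ} (hb : 0 < b) :
    MonotoneOn (fun s : ℝ => (b ^ s - 1) / s) (Ioi 0) := by
  intro x hx y hy hxy
  simpa using (convexOn_rpow_left hb).secant_mono (a := 0) trivial trivial trivial
    (ne_of_gt hx) (ne_of_gt hy) hxy

noncomputable def stationarityFactor (α s : ℝ) : ℝ :=
  α / 2 * ((2 ^ s - 1) / s) + log 2 * 2 ^ s

noncomputable def powerProfile (α s : ℝ) : ℝ :=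
  (2 ^ s - 1) / stationarityFactor α s

section

variable {α : ℝ}

lemma stationarityFactor_pos (hα : 0 ≤ α) {s : ℝ} (hs : 0 < s) : 0 < stationarityFactor α s := by
  have := one_lt_rpow one_lt_two hs
  have : 0 < (2 : ℝ) ^ s - 1 := by linarith
  unfold stationarityFactor
  positivity

lemma stationarityFactor_monotoneOn (hα : 0 ≤ α) :
    MonotoneOn (stationarityFactor α) (Ioi 0) := by
  intro x hx y hy hxy
  unfold stationarityFactor
  gcongr α / 2 * ?_ + _ * ?_
  · exact rpow_sub_one_div_monotoneOn two_pos hx hy hxy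
  · exact rpow_le_rpow_of_exponent_le one_le_two hxy

lemma powerProfile_eq_inv {s : ℝ} (hs : 0 < s) :
    powerProfile α s = (α / 2 / s + log 2 + log 2 / (2 ^ s - 1))⁻¹ := by
  have : (2 : ℝ) ^ s - 1 ≠ 0 := by linarith [one_lt_rpow one_lt_two hs]
  unfold powerProfile stationarityFactor
  field_simp
  ring

lemma powerProfile_strictMonoOn (hα : 0 ≤ α) : StrictMonoOn (powerProfile α) (Ioi 0) := by
  intro x (hx : 0 < x) y (hy : 0 < y) hxy
  have hx1 := one_lt_rpow one_lt_two hx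
  have h2 : (2 : ℝ) ^ x < 2 ^ y := rpow_lt_rpow_of_exponent_lt one_lt_two hxy
  have hx2 : 0 < (2 : ℝ) ^ x - 1 := by linarith
  have hy2 : 0 < (2 : ℝ) ^ y - 1 := by linarith
  have hlog : 0 < log 2 := log_pos one_lt_two
  rw [powerProfile_eq_inv hx, powerProfile_eq_inv hy]
  have h₁ : α / 2 / y ≤ α / 2 / x := div_le_div_of_nonneg_left (by positivity) hx hxy.le
  have h₂ : log 2 / (2 ^ y - 1) < log 2 / (2 ^ x - 1) :=
    div_lt_div_of_pos_left hlog hx2 (by linarith)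
  exact (inv_lt_inv₀ (by positivity) (by positivity)).2 (by linarith)

end

lemma strictMonoOn_mul_of_rpow_mul_eq {x K : ℝ → ℝ} {p c C : ℝ} (hp : 0 < p) (hc : 0 < c)
    (hK : MonotoneOn K (Ioi 0)) (hKpos : ∀ s > 0, 0 < K s)
    (hC : ∀ l > 0, 0 < x l ∧ x l ^ p * K (c * l * x l) = C) :
    StrictMonoOn (fun l => c * l * x l) (Ioi 0) := by
  intro a (ha : 0 < a) b (hb : 0 < b) hab
  obtain ⟨hxa, hCa⟩ := hC a ha
  obtain ⟨hxb, hCb⟩ := hC b hb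
  by_contra! hba
  have hsa : 0 < c * a * x a := by positivity
  have hsb : 0 < c * b * x b := by positivity
  have hKba : K (c * b * x b) ≤ K (c * a * x a) := hK hsb hsa hba
  have hpow : x a ^ p ≤ x b ^ p := by
    refine le_of_mul_le_mul_right ?_ (hKpos _ hsa)
    calc x a ^ p * K (c * a * x a) = x b ^ p * K (c * b * x b) := hCa.trans hCb.symm
      _ ≤ x b ^ p * K (c * a * x a) := by gcongr
  have hxab : x a ≤ x b := (rpow_le_rpow_iff hxa.le hxb.le hp).1 hpow
  have : c * a * x a < c * b * x b :=
    calc c * a * x a < c * b * x a := by gcongr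
      _ ≤ c * b * x b := by gcongr
  linarith

lemma rpow_mul_stationarityFactor_eq {D₁ D₂ α μ l x : ℝ} (hD₁ : 0 < D₁) (hD₂ : 0 < D₂)
    (hl : 0 < l) (hx : 0 < x)
    (h : (α / 2) * D₁ * x ^ ((α - 2) / 2) * ((2 : ℝ) ^ (D₂ * π * l * x) - 1)
        + Real.log 2 * D₁ * D₂ * π * l * x ^ (α / 2) * (2 : ℝ) ^ (D₂ * π * l * x)
      = μ * π * l) :
    x ^ (α / 2) * stationarityFactor α (D₂ * π * l * x) = μ / (D₁ * D₂) := by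
  have hpow : x ^ (α / 2) = x ^ ((α - 2) / 2) * x := by
    rw [← rpow_add_one hx.ne']
    ring_nf
  unfold stationarityFactor
  generalize (2 : ℝ) ^ (D₂ * π * l * x) = E at h ⊢
  calc x ^ (α / 2) * (α / 2 * ((E - 1) / (D₂ * π * l * x)) + log 2 * E)
      = ((α / 2) * D₁ * x ^ ((α - 2) / 2) * (E - 1)
          + Real.log 2 * D₁ * D₂ * π * l * x ^ (α / 2) * E) / (D₁ * D₂ * π * l) := by
        rw [hpow]; field_simp
    _ = μ / (D₁ * D₂) := by rw [h]; field_simp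

theorem stmt_10_general (D₁ D₂ α μ : ℝ) (hD₁ : 0 < D₁) (hD₂ : 0 < D₂) (hα : 2 < α) (hμ : 0 < μ)
    (x₁ : ℝ → ℝ)
    (hroot : ∀ l > (0:ℝ), 0 < x₁ l ∧
      (α / 2) * D₁ * (x₁ l) ^ ((α - 2) / 2) * ((2 : ℝ) ^ (D₂ * π * l * x₁ l) - 1)
        + Real.log 2 * D₁ * D₂ * π * l * (x₁ l) ^ (α / 2)
            * (2 : ℝ) ^ (D₂ * π * l * x₁ l)
      = μ * π * l) :
    StrictMonoOn
      (fun l => D₁ * (x₁ l) ^ (α / 2) * ((2 : ℝ) ^ (D₂ * π * l * x₁ l) - 1))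
      (Set.Ioi 0) := by
  have hα₀ : 0 ≤ α := by linarith
  have hfoc : ∀ l > 0, 0 < x₁ l ∧
      x₁ l ^ (α / 2) * stationarityFactor α (D₂ * π * l * x₁ l) = μ / (D₁ * D₂) :=
    fun l hl => by
      obtain ⟨hx, h⟩ := hroot l hl
      exact ⟨hx, rpow_mul_stationarityFactor_eq hD₁ hD₂ hl hx h⟩
  have hs : StrictMonoOn (fun l => D₂ * π * l * x₁ l) (Ioi 0) :=
    strictMonoOn_mul_of_rpow_mul_eq (by linarith) (by positivity)
      (stationarityFactor_monotoneOn hα₀) (fun s hs => stationarityFactor_pos hα₀ hs) hfoc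
  have hP : ∀ l > 0, D₁ * x₁ l ^ (α / 2) * ((2 : ℝ) ^ (D₂ * π * l * x₁ l) - 1)
      = μ / D₂ * powerProfile α (D₂ * π * l * x₁ l) := by
    intro l hl
    obtain ⟨hx, hK⟩ := hfoc l hl
    have hKne := (stationarityFactor_pos hα₀ (by positivity : 0 < D₂ * π * l * x₁ l)).ne'
    rw [eq_div_of_mul_eq hKne hK, powerProfile]
    field_simp
  intro a (ha : 0 < a) b (hb : 0 < b) hab
  simp only [hP a ha, hP b hb]
  have hsa : 0 < D₂ * π * a * x₁ a := by have := (hroot a ha).1; positivity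
  have hsb : 0 < D₂ * π * b * x₁ b := by have := (hroot b hb).1; positivity
  gcongr
  exact powerProfile_strictMonoOn hα₀ hsa hsb (hs ha hb hab)

/-- With `x₁(λ)` the positive stationary point of the Lagrangian, the optimal transmit
power `P̄(λ) = D₁ x₁(λ)^{α/2}(2^{D₂πλx₁(λ)} − 1)` is strictly increasing in `λ`. -/
theorem stmt_10 (D₁ D₂ α μ : ℝ) (hD₁ : 0 < D₁) (hD₂ : 0 < D₂) (hα : 2 < α) (hμ : 0 < μ)
    (x₁ : ℝ → ℝ)
    (hroot : ∀ l > (0:ℝ), 0 < x₁ l ∧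
      (α / 2) * D₁ * (x₁ l) ^ ((α - 2) / 2) * ((2 : ℝ) ^ (D₂ * π * l * x₁ l) - 1)
        + Real.log 2 * D₁ * D₂ * π * l * (x₁ l) ^ (α / 2)
            * (2 : ℝ) ^ (D₂ * π * l * x₁ l)
      = μ * π * l)
    (huniq : ∀ l > (0:ℝ), ∀ x > (0:ℝ),
      (α / 2) * D₁ * x ^ ((α - 2) / 2) * ((2 : ℝ) ^ (D₂ * π * l * x) - 1)
        + Real.log 2 * D₁ * D₂ * π * l * x ^ (α / 2) * (2 : ℝ) ^ (D₂ * π * l * x)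
      = μ * π * l → x = x₁ l) :
    StrictMonoOn
      (fun l => D₁ * (x₁ l) ^ (α / 2) * ((2 : ℝ) ^ (D₂ * π * l * x₁ l) - 1))
      (Set.Ioi 0) :=
  stmt_10_general D₁ D₂ α μ hD₁ hD₂ hα hμ x₁ hroot
end

section
/- Fix D₁, D₃ > 0, α > 2, μ > 0, P_c > 0, and define, via the high-SE approximations, g(λ) = P_c + D₁ x(λ)^{α/2} e^{D₃πλx(λ)} − μπλx(λ) where x(λ) = (α/(2D₃πλ)) W((2D₃πλ/α)(μ/(D₁D₃))^{2/α}) solves (ln stands for natural log) the stationarity condition D₁D₃ x^{α/2} e^{D₃πλx} = μ. Then g(λ) = 0 holds at λ₁ = (1/(πD₃) + P_c/(μπ)) (D₁D₃/μ)^{2/α} exp(2/α + 2D₃P_c/(μα)). -/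
/-!
Stationarity gives `D₁ x^{α/2} e^{D₃πλx} = μ / D₃` at every `λ > 0`, so `g(λ) = P_c + μ/D₃ − μπλx(λ)`,
while `μπλx(λ) = (μα / 2D₃) W(y(λ))` with `y(λ)` linear in `λ`. Hence `g(λ) = 0` exactly when
`W(y(λ)) = w := (2/α)(1 + D₃P_c/μ)`; as `W` inverts `u ↦ u eᵘ` on `[-1, ∞)`, this means
`y(λ) = w e^w`, and solving this linear equation for `λ` gives `λ₁`.
-/

open Real

theorem strictMonoOn_mul_exp : StrictMonoOn (fun u : ℝ => u * exp u) (Set.Ici (-1)) := by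
  apply strictMonoOn_of_deriv_pos (convex_Ici _) (by fun_prop)
  intro u hu
  rw [interior_Ici, Set.mem_Ioi] at hu
  have hderiv : HasDerivAt (fun u : ℝ => u * exp u) (1 * exp u + u * exp u) u :=
    (hasDerivAt_id u).mul (hasDerivAt_exp u)
  rw [hderiv.deriv]
  have := exp_pos u
  nlinarith

theorem apply_mul_exp_eq_self {W : ℝ → ℝ}
    (hW : ∀ y : ℝ, -exp (-1) ≤ y → W y * exp (W y) = y ∧ -1 ≤ W y)
    {w : ℝ} (hw : -1 ≤ w) : W (w * exp w) = w := by
  have hdom : -exp (-1) ≤ w * exp w := by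
    simpa using strictMonoOn_mul_exp.monotoneOn Set.self_mem_Ici hw hw
  obtain ⟨hinv, hrange⟩ := hW _ hdom
  exact strictMonoOn_mul_exp.injOn hrange hw hinv

theorem rpow_mul_inv_rpow_cancel {a : ℝ} (ha : 0 < a) (p k : ℝ) :
    k * a ^ p * a⁻¹ ^ p = k := by
  rw [mul_assoc, ← mul_rpow ha.le (inv_nonneg.mpr ha.le), mul_inv_cancel₀ ha.ne', one_rpow,
    mul_one]

theorem threshold_lambertW_arg {D₁ D₃ α μ Pc w : ℝ} (hD₁ : 0 < D₁) (hD₃ : 0 < D₃) (hα : 0 < α)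
    (hμ : 0 < μ) (hw : w = 2 / α + 2 * D₃ * Pc / (μ * α)) :
    2 * D₃ * π * ((1 / (π * D₃) + Pc / (μ * π)) * (D₁ * D₃ / μ) ^ (2 / α) * exp w) / α
      * (μ / (D₁ * D₃)) ^ (2 / α) = w * exp w := by
  have hcoef : 2 * D₃ * π * (1 / (π * D₃) + Pc / (μ * π)) / α = w := by
    rw [hw]
    field_simp [pi_pos.ne']
  calc _ = 2 * D₃ * π * (1 / (π * D₃) + Pc / (μ * π)) / α * exp w * (D₁ * D₃ / μ) ^ (2 / α)
          * (D₁ * D₃ / μ)⁻¹ ^ (2 / α) := by rw [inv_div]; ring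
    _ = 2 * D₃ * π * (1 / (π * D₃) + Pc / (μ * π)) / α * exp w :=
      rpow_mul_inv_rpow_cancel (by positivity) _ _
    _ = w * exp w := by rw [hcoef]

/-- At the closed-form threshold density
`lam₁ = (1/(πD₃) + P_c/(μπ))(D₁D₃/μ)^{2/α} exp(2/α + 2D₃P_c/(μα))`, the minimized
high-SE Lagrangian `g(λ) = P_c + D₁ x(λ)^{α/2} e^{D₃πλx(λ)} − μπλx(λ)` equals zero,
where `x(λ) = (α/(2D₃πλ)) W((2D₃πλ/α)(μ/(D₁D₃))^{2/α})`. -/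
theorem stmt_15 (W : ℝ → ℝ)
    (hW : ∀ y : ℝ, -Real.exp (-1) ≤ y → W y * Real.exp (W y) = y ∧ -1 ≤ W y)
    (D₁ D₃ α μ Pc : ℝ) (hD₁ : 0 < D₁) (hD₃ : 0 < D₃) (hα : 2 < α) (hμ : 0 < μ)
    (hPc : 0 < Pc)
    (x : ℝ → ℝ)
    (hx : ∀ l > (0:ℝ),
      x l = α / (2 * D₃ * π * l) * W ((2 * D₃ * π * l / α) * (μ / (D₁ * D₃)) ^ (2 / α)))
    (hstat : ∀ l > (0:ℝ), D₁ * D₃ * (x l) ^ (α / 2) * Real.exp (D₃ * π * l * x l) = μ) :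
    let lam₁ := (1 / (π * D₃) + Pc / (μ * π)) * (D₁ * D₃ / μ) ^ (2 / α)
        * Real.exp (2 / α + 2 * D₃ * Pc / (μ * α));
    Pc + D₁ * (x lam₁) ^ (α / 2) * Real.exp (D₃ * π * lam₁ * x lam₁) - μ * π * lam₁ * x lam₁
      = 0 := by
  intro lam₁
  have hα₀ : 0 < α := by linarith
  have hπ := pi_pos
  have hlam₁ : 0 < lam₁ := by positivity
  have hpower : D₁ * x lam₁ ^ (α / 2) * exp (D₃ * π * lam₁ * x lam₁) = μ / D₃ := by
    rw [eq_div_iff hD₃.ne', ← hstat lam₁ hlam₁]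
    ring
  have hw : 0 < 2 / α + 2 * D₃ * Pc / (μ * α) := by positivity
  have hW_lam₁ : W ((2 * D₃ * π * lam₁ / α) * (μ / (D₁ * D₃)) ^ (2 / α))
      = 2 / α + 2 * D₃ * Pc / (μ * α) := by
    rw [threshold_lambertW_arg hD₁ hD₃ hα₀ hμ rfl]
    exact apply_mul_exp_eq_self hW (by linarith)
  rw [hpower, hx lam₁ hlam₁, hW_lam₁]
  field_simp
  ring
end
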